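/- Let μ be a Borel probability measure on (0,∞) with ∫₀^∞ v^{-3/2} μ(dv) < ∞, let φ(x) = ∫₀^∞ ρ_v(x) μ(dv), g(x) = φ'(x)/φ(x), and define h(x) = (d²/dx²) log φ(x) − (1/x)(d/dx) log φ(x) for x ≠ 0. Then for every x ≠ 0, h(x) = ∫₀^∞ (x/v + g(x))² F(dv|x). -/

import Mathlib

/-!
Differentiating under the integral sign, which the moment condition allows because `ρ_v(x)`,
`∂ₓρ_v(x) = -(x/v) ρ_v(x)` and `∂ₓ²ρ_v(x) = (x²/v² - 1/v) ρ_v(x)` are dominated, locally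
uniformly in `x`, by multiples of `1 + v^{-3/2}`, gives `φ' = -∫ (x/v) ρ_v dμ` and
`φ'' = ∫ (x²/v² - 1/v) ρ_v dμ`. Then `h = φ''/φ - g² - g/x`. On the other side, expanding the square
and using `∫ (x/v) F(dv|x) = -g` and `∫ (1/v) F(dv|x) = -g/x` yields the same expression.
-/

open MeasureTheory
open scoped ENNReal

/-- The density `ρ_v(x) = (2πv)^{-1/2} exp(−x²/(2v))` of the centered Gaussian law `N(0,v)`. -/
noncomputable def gaussDens (v x : ℝ) : ℝ :=
  Real.exp (-(x ^ 2) / (2 * v)) / Real.sqrt (2 * Real.pi * v)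

/-- The normal variance-mixture function `φ(x) = ∫₀^∞ ρ_v(x) μ(dv)`. -/
noncomputable def mixDens (μ : Measure ℝ) (x : ℝ) : ℝ :=
  ∫ v, gaussDens v x ∂μ

/-- The conditional mixing measure `F(dv|x) = ρ_v(x) μ(dv) / φ(x)`. -/
noncomputable def condMeasure (μ : Measure ℝ) (x : ℝ) : Measure ℝ :=
  (ENNReal.ofReal (mixDens μ x))⁻¹ • μ.withDensity (fun v => ENNReal.ofReal (gaussDens v x))

/-- `g(x) = φ'(x)/φ(x)`. -/
noncomputable def gFun (μ : Measure ℝ) (x : ℝ) : ℝ :=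
  deriv (mixDens μ) x / mixDens μ x

/-- `h(x) = (log φ)''(x) − (1/x)(log φ)'(x)`. -/
noncomputable def hFun (μ : Measure ℝ) (x : ℝ) : ℝ :=
  deriv (deriv (fun y => Real.log (mixDens μ y))) x
    - (1 / x) * deriv (fun y => Real.log (mixDens μ y)) x

noncomputable def mixDensDeriv (μ : Measure ℝ) (x : ℝ) : ℝ :=
  ∫ v, -(x / v) * gaussDens v x ∂μ

noncomputable def mixDensDeriv2 (μ : Measure ℝ) (x : ℝ) : ℝ :=
  ∫ v, (x ^ 2 / v ^ 2 - 1 / v) * gaussDens v x ∂μ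

section Gaussian

variable {v : ℝ}

lemma gaussDens_nonneg (v x : ℝ) : 0 ≤ gaussDens v x := by
  unfold gaussDens; positivity

lemma gaussDens_pos (hv : 0 < v) (x : ℝ) : 0 < gaussDens v x := by
  unfold gaussDens; positivity

lemma measurable_gaussDens (x : ℝ) : Measurable fun v => gaussDens v x := by
  unfold gaussDens; fun_prop

lemma inv_mul_rpow_neg_half (hv : 0 < v) : v⁻¹ * v ^ (-(1 / 2) : ℝ) = v ^ (-(3 / 2) : ℝ) := by
  rw [← Real.rpow_neg_one v, ← Real.rpow_add hv]; norm_num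

lemma rpow_neg_half_le_one_add (hv : 0 < v) : v ^ (-(1 / 2) : ℝ) ≤ 1 + v ^ (-(3 / 2) : ℝ) := by
  rcases le_total 1 v with h | h
  · have : v ^ (-(1 / 2) : ℝ) ≤ 1 := Real.rpow_le_one_of_one_le_of_nonpos h (by norm_num)
    linarith [Real.rpow_nonneg hv.le (-(3 / 2) : ℝ)]
  · linarith [Real.rpow_le_rpow_of_exponent_ge hv h (by norm_num : (-(3 / 2) : ℝ) ≤ -(1 / 2))]

lemma gaussDens_le_exp_mul_rpow (hv : 0 < v) (x : ℝ) :
    gaussDens v x ≤ Real.exp (-(x ^ 2) / (2 * v)) * v ^ (-(1 / 2) : ℝ) := by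
  rw [Real.rpow_neg hv.le, ← Real.sqrt_eq_rpow, ← div_eq_mul_inv, gaussDens]
  gcongr
  nlinarith [Real.pi_gt_three]

lemma gaussDens_le_rpow (hv : 0 < v) (x : ℝ) : gaussDens v x ≤ v ^ (-(1 / 2) : ℝ) := by
  refine (gaussDens_le_exp_mul_rpow hv x).trans (mul_le_of_le_one_left (by positivity) ?_)
  exact Real.exp_le_one_iff.2 (div_nonpos_of_nonpos_of_nonneg (by nlinarith) (by positivity))

lemma sq_div_sq_mul_exp_le (hv : 0 < v) (x : ℝ) :
    x ^ 2 / v ^ 2 * Real.exp (-(x ^ 2) / (2 * v)) ≤ 2 / v := by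
  set t := x ^ 2 / (2 * v)
  have ht : x ^ 2 / v ^ 2 * Real.exp (-(x ^ 2) / (2 * v)) = 2 / v * (t * Real.exp (-t)) := by
    simp only [t, neg_div]; field_simp
  have hexp : t * Real.exp (-t) ≤ 1 :=
    (Real.mul_exp_neg_le_exp_neg_one t).trans (Real.exp_le_one_iff.2 (by norm_num))
  rw [ht]
  exact mul_le_of_le_one_right (by positivity) hexp

lemma hasDerivAt_gaussDens (hv : 0 < v) (x : ℝ) :
    HasDerivAt (fun y => gaussDens v y) (-(x / v) * gaussDens v x) x := by
  have hexponent : HasDerivAt (fun y : ℝ => -(y ^ 2) / (2 * v)) (-(x / v)) x :=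
    ((hasDerivAt_pow 2 x).neg.div_const (2 * v)).congr_deriv (by field_simp; ring)
  refine (hexponent.exp.div_const (Real.sqrt (2 * Real.pi * v))).congr_deriv ?_
  unfold gaussDens; ring

lemma hasDerivAt_deriv_gaussDens (hv : 0 < v) (x : ℝ) :
    HasDerivAt (fun y => -(y / v) * gaussDens v y) ((x ^ 2 / v ^ 2 - 1 / v) * gaussDens v x) x := by
  have hlin : HasDerivAt (fun y : ℝ => -(y / v)) (-(1 / v)) x := ((hasDerivAt_id x).div_const v).neg
  refine (hlin.mul (hasDerivAt_gaussDens hv x)).congr_deriv ?_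
  ring

lemma norm_deriv_gaussDens_le (hv : 0 < v) (x : ℝ) :
    ‖-(x / v) * gaussDens v x‖ ≤ |x| * v ^ (-(3 / 2) : ℝ) := by
  rw [norm_mul, norm_neg, Real.norm_eq_abs, abs_div, abs_of_pos hv,
    Real.norm_of_nonneg (gaussDens_nonneg v x), ← inv_mul_rpow_neg_half hv]
  calc |x| / v * gaussDens v x ≤ |x| / v * v ^ (-(1 / 2) : ℝ) := by
        gcongr; exact gaussDens_le_rpow hv x
    _ = |x| * (v⁻¹ * v ^ (-(1 / 2) : ℝ)) := by ring

lemma norm_deriv2_gaussDens_le (hv : 0 < v) (x : ℝ) :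
    ‖(x ^ 2 / v ^ 2 - 1 / v) * gaussDens v x‖ ≤ 3 * v ^ (-(3 / 2) : ℝ) := by
  have hρ := gaussDens_nonneg v x
  have hsq : x ^ 2 / v ^ 2 * gaussDens v x ≤ 2 * v ^ (-(3 / 2) : ℝ) :=
    calc x ^ 2 / v ^ 2 * gaussDens v x
        ≤ x ^ 2 / v ^ 2 * (Real.exp (-(x ^ 2) / (2 * v)) * v ^ (-(1 / 2) : ℝ)) := by
          gcongr; exact gaussDens_le_exp_mul_rpow hv x
      _ ≤ 2 / v * v ^ (-(1 / 2) : ℝ) := by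
          rw [← mul_assoc]; gcongr; exact sq_div_sq_mul_exp_le hv x
      _ = 2 * v ^ (-(3 / 2) : ℝ) := by rw [← inv_mul_rpow_neg_half hv]; ring
  have hinv : 1 / v * gaussDens v x ≤ v ^ (-(3 / 2) : ℝ) :=
    calc 1 / v * gaussDens v x ≤ v⁻¹ * v ^ (-(1 / 2) : ℝ) := by
          rw [one_div]; gcongr; exact gaussDens_le_rpow hv x
      _ = v ^ (-(3 / 2) : ℝ) := inv_mul_rpow_neg_half hv
  rw [norm_mul, Real.norm_of_nonneg hρ, Real.norm_eq_abs]
  calc |x ^ 2 / v ^ 2 - 1 / v| * gaussDens v x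
      ≤ (x ^ 2 / v ^ 2 + 1 / v) * gaussDens v x := by
        have : 0 ≤ x ^ 2 / v ^ 2 := by positivity
        have : 0 ≤ 1 / v := by positivity
        gcongr
        exact abs_sub_le_iff.2 ⟨by linarith, by linarith⟩
    _ ≤ 3 * v ^ (-(3 / 2) : ℝ) := by linarith

end Gaussian

section Mixture

lemma mixDens_nonneg (μ : Measure ℝ) (x : ℝ) : 0 ≤ mixDens μ x :=
  integral_nonneg fun v => gaussDens_nonneg v x

lemma integral_condMeasure (μ : Measure ℝ) (x : ℝ) (f : ℝ → ℝ) :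
    ∫ v, f v ∂condMeasure μ x = (mixDens μ x)⁻¹ * ∫ v, gaussDens v x * f v ∂μ := by
  rw [condMeasure, integral_smul_measure, ENNReal.toReal_inv,
    ENNReal.toReal_ofReal (mixDens_nonneg μ x), smul_eq_mul,
    integral_withDensity_eq_integral_toReal_smul (measurable_gaussDens x).ennreal_ofReal
      (Filter.Eventually.of_forall fun _ => ENNReal.ofReal_lt_top)]
  simp only [ENNReal.toReal_ofReal (gaussDens_nonneg _ x), smul_eq_mul]

variable {μ : Measure ℝ}

lemma integrable_gaussDens [IsFiniteMeasure μ] (hpos : ∀ᵐ v ∂μ, 0 < v)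
    (hmom : Integrable (fun v : ℝ => v ^ (-(3 / 2) : ℝ)) μ) (x : ℝ) :
    Integrable (fun v => gaussDens v x) μ :=
  ((integrable_const 1).add hmom).mono' (measurable_gaussDens x).aestronglyMeasurable <|
    hpos.mono fun v hv => by
      rw [Real.norm_of_nonneg (gaussDens_nonneg v x)]
      exact (gaussDens_le_rpow hv x).trans (rpow_neg_half_le_one_add hv)

lemma integrable_deriv_gaussDens (hpos : ∀ᵐ v ∂μ, 0 < v)
    (hmom : Integrable (fun v : ℝ => v ^ (-(3 / 2) : ℝ)) μ) (x : ℝ) :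
    Integrable (fun v => -(x / v) * gaussDens v x) μ :=
  (hmom.const_mul |x|).mono' (by have := measurable_gaussDens x; fun_prop) <|
    hpos.mono fun v hv => norm_deriv_gaussDens_le hv x

lemma integrable_deriv2_gaussDens (hpos : ∀ᵐ v ∂μ, 0 < v)
    (hmom : Integrable (fun v : ℝ => v ^ (-(3 / 2) : ℝ)) μ) (x : ℝ) :
    Integrable (fun v => (x ^ 2 / v ^ 2 - 1 / v) * gaussDens v x) μ :=
  (hmom.const_mul 3).mono' (by have := measurable_gaussDens x; fun_prop) <|
    hpos.mono fun v hv => norm_deriv2_gaussDens_le hv x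

lemma mixDens_pos [IsFiniteMeasure μ] [NeZero μ] (hpos : ∀ᵐ v ∂μ, 0 < v)
    (hmom : Integrable (fun v : ℝ => v ^ (-(3 / 2) : ℝ)) μ) (x : ℝ) : 0 < mixDens μ x := by
  rw [mixDens, integral_pos_iff_support_of_nonneg_ae
    (Filter.Eventually.of_forall fun v => gaussDens_nonneg v x) (integrable_gaussDens hpos hmom x)]
  have hsupp : Function.support (fun v => gaussDens v x) =ᵐ[μ] (Set.univ : Set ℝ) :=
    Filter.eventuallyEq_univ.2 (hpos.mono fun v hv => (gaussDens_pos hv x).ne')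
  rw [measure_congr hsupp]
  exact Measure.measure_univ_pos.2 (NeZero.ne μ)

lemma hasDerivAt_mixDens [IsFiniteMeasure μ] (hpos : ∀ᵐ v ∂μ, 0 < v)
    (hmom : Integrable (fun v : ℝ => v ^ (-(3 / 2) : ℝ)) μ) (x₀ : ℝ) :
    HasDerivAt (mixDens μ) (mixDensDeriv μ x₀) x₀ := by
  refine (hasDerivAt_integral_of_dominated_loc_of_deriv_le (Metric.ball_mem_nhds x₀ one_pos)
    (Filter.Eventually.of_forall fun x => (measurable_gaussDens x).aestronglyMeasurable)
    (integrable_gaussDens hpos hmom x₀) (integrable_deriv_gaussDens hpos hmom x₀).1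
    ?_ (hmom.const_mul (|x₀| + 1)) (hpos.mono fun v hv x _ => hasDerivAt_gaussDens hv x)).2
  refine hpos.mono fun v hv x hx => (norm_deriv_gaussDens_le hv x).trans ?_
  have hx' : |x| ≤ |x₀| + 1 := by
    have := abs_sub_abs_le_abs_sub x x₀
    linarith [(Real.dist_eq x x₀ ▸ Metric.mem_ball.1 hx : |x - x₀| < 1)]
  gcongr

lemma hasDerivAt_mixDensDeriv (hpos : ∀ᵐ v ∂μ, 0 < v)
    (hmom : Integrable (fun v : ℝ => v ^ (-(3 / 2) : ℝ)) μ) (x₀ : ℝ) :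
    HasDerivAt (mixDensDeriv μ) (mixDensDeriv2 μ x₀) x₀ :=
  (hasDerivAt_integral_of_dominated_loc_of_deriv_le (Metric.ball_mem_nhds x₀ one_pos)
    (Filter.Eventually.of_forall fun x => (integrable_deriv_gaussDens hpos hmom x).1)
    (integrable_deriv_gaussDens hpos hmom x₀) (integrable_deriv2_gaussDens hpos hmom x₀).1
    (hpos.mono fun _ hv x _ => norm_deriv2_gaussDens_le hv x) (hmom.const_mul 3)
    (hpos.mono fun _ hv x _ => hasDerivAt_deriv_gaussDens hv x)).2

lemma gFun_eq [IsFiniteMeasure μ] (hpos : ∀ᵐ v ∂μ, 0 < v)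
    (hmom : Integrable (fun v : ℝ => v ^ (-(3 / 2) : ℝ)) μ) (x : ℝ) :
    gFun μ x = mixDensDeriv μ x / mixDens μ x := by
  rw [gFun, (hasDerivAt_mixDens hpos hmom x).deriv]

lemma hFun_eq [IsFiniteMeasure μ] [NeZero μ] (hpos : ∀ᵐ v ∂μ, 0 < v)
    (hmom : Integrable (fun v : ℝ => v ^ (-(3 / 2) : ℝ)) μ) (x : ℝ) :
    hFun μ x = (mixDensDeriv2 μ x * mixDens μ x - mixDensDeriv μ x * mixDensDeriv μ x)
        / mixDens μ x ^ 2 - 1 / x * (mixDensDeriv μ x / mixDens μ x) := by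
  have hlog : deriv (fun y => Real.log (mixDens μ y)) = fun y => mixDensDeriv μ y / mixDens μ y :=
    funext fun y => ((hasDerivAt_mixDens hpos hmom y).log (mixDens_pos hpos hmom y).ne').deriv
  have hquot : HasDerivAt (fun y => mixDensDeriv μ y / mixDens μ y)
      ((mixDensDeriv2 μ x * mixDens μ x - mixDensDeriv μ x * mixDensDeriv μ x) / mixDens μ x ^ 2) x :=
    (hasDerivAt_mixDensDeriv hpos hmom x).div (hasDerivAt_mixDens hpos hmom x)
      (mixDens_pos hpos hmom x).ne'
  rw [hFun, hlog, hquot.deriv]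

lemma integral_sq_condMeasure [IsFiniteMeasure μ] (hpos : ∀ᵐ v ∂μ, 0 < v)
    (hmom : Integrable (fun v : ℝ => v ^ (-(3 / 2) : ℝ)) μ) {x : ℝ} (hx : x ≠ 0) (g : ℝ) :
    ∫ v, (x / v + g) ^ 2 ∂condMeasure μ x = (mixDens μ x)⁻¹ *
      (mixDensDeriv2 μ x - (1 / x + 2 * g) * mixDensDeriv μ x + g ^ 2 * mixDens μ x) := by
  have hexpand : ∀ᵐ v ∂μ, gaussDens v x * (x / v + g) ^ 2 =
      (x ^ 2 / v ^ 2 - 1 / v) * gaussDens v x - (1 / x + 2 * g) * (-(x / v) * gaussDens v x)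
        + g ^ 2 * gaussDens v x :=
    hpos.mono fun v hv => by field_simp; ring
  have hA := integrable_deriv2_gaussDens hpos hmom x
  have hB := (integrable_deriv_gaussDens hpos hmom x).const_mul (1 / x + 2 * g)
  have hρ := (integrable_gaussDens hpos hmom x).const_mul (g ^ 2)
  rw [integral_condMeasure, integral_congr_ae hexpand, integral_add ?_ hρ,
    integral_sub hA hB, integral_const_mul, integral_const_mul]
  · rfl
  · exact hA.sub hB

end Mixture

/-- If `μ` is a Borel probability measure on `(0,∞)` with
`∫ v^{-3/2} μ(dv) < ∞`, then for every `x ≠ 0`,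
`h(x) = ∫ (x/v + g(x))² F(dv|x)`. -/
theorem hFun_identity (μ : Measure ℝ) [IsProbabilityMeasure μ]
    (hμ : μ (Set.Iic 0) = 0)
    (hmom : ∫⁻ v, ENNReal.ofReal (v ^ (-(3 / 2) : ℝ)) ∂μ < ⊤) :
    ∀ x : ℝ, x ≠ 0 →
      hFun μ x = ∫ v, (x / v + gFun μ x) ^ 2 ∂(condMeasure μ x) := by
  have hpos : ∀ᵐ v ∂μ, 0 < v := by
    rw [ae_iff]; simp only [not_lt]; exact hμ
  have hint : Integrable (fun v : ℝ => v ^ (-(3 / 2) : ℝ)) μ :=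
    ⟨(by fun_prop : Measurable fun v : ℝ => v ^ (-(3 / 2) : ℝ)).aestronglyMeasurable,
      (hasFiniteIntegral_iff_ofReal (hpos.mono fun v hv => Real.rpow_nonneg hv.le _)).2 hmom⟩
  intro x hx
  have hφ := (mixDens_pos hpos hint x).ne'
  rw [hFun_eq hpos hint, integral_sq_condMeasure hpos hint hx, gFun_eq hpos hint]
  field_simp
  ring
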